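/- Let M be a compact metric space, f_1,…,f_k : M → M continuous, and let ω ∈ Σ_k be a weakly hyperbolic sequence, i.e., I_ω = ⋂_{n} f_{ω_0}∘⋯∘f_{ω_n}(M) = {π(ω)} is a singleton. Then for every sequence (μ_n) of Borel probability measures on M, the pushforward measures (f_{ω_0})_* (f_{ω_1})_* ⋯ (f_{ω_n})_* μ_n converge weakly-* to the Dirac measure δ_{π(ω)} as n → ∞. -/

import Mathlib

/-!
The images `Kₙ = f_{ω₀} ∘ ⋯ ∘ f_{ωₙ}(M)` form a decreasing sequence of compact sets with
intersection `{p}`, so they eventually enter every neighbourhood of `p`. Hence, for continuous `g`,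
the values of `g ∘ f_{ω₀} ∘ ⋯ ∘ f_{ωₙ}` eventually lie in any closed ball around `g p`, and so does
their average against the probability measure `μₙ`, since closed balls are convex.
-/

open Set MeasureTheory Filter Topology

/-- `comps f ω n = f (ω 0) ∘ f (ω 1) ∘ ⋯ ∘ f (ω n)`. -/
def comps {M : Type*} {k : ℕ} (f : Fin k → M → M) (ξ : ℕ → Fin k) : ℕ → M → M
  | 0 => f (ξ 0)
  | n + 1 => comps f ξ n ∘ f (ξ (n + 1))

section

variable {M : Type*} {k : ℕ}

lemma continuous_comps [TopologicalSpace M] {f : Fin k → M → M} (hf : ∀ i, Continuous (f i))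
    (ω : ℕ → Fin k) (n : ℕ) : Continuous (comps f ω n) := by
  induction n with
  | zero => exact hf _
  | succ n ih => exact ih.comp (hf _)

lemma antitone_range_comps (f : Fin k → M → M) (ω : ℕ → Fin k) :
    Antitone fun n => range (comps f ω n) :=
  antitone_nat_of_succ_le fun _ => range_comp_subset_range _ _

end

lemma tendsto_smallSets_nhds_of_antitone_isCompact {X : Type*} [TopologicalSpace X] [T2Space X]
    {K : ℕ → Set X} {p : X} (hK : Antitone K) (hKc : ∀ n, IsCompact (K n))
    (hp : ⋂ n, K n = {p}) : Tendsto K atTop (𝓝 p).smallSets := by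
  refine tendsto_smallSets_iff.2 fun U hU => ?_
  obtain ⟨N, hN⟩ := exists_subset_nhds_of_isCompact' hK.directed_ge hKc
    (fun n => (hKc n).isClosed) (by simpa [hp] using hU)
  exact eventually_atTop.2 ⟨N, fun n hn => (hK hn).trans hN⟩

lemma tendsto_integral_of_tendsto_range_smallSets {α ι E : Type*} [MeasurableSpace α]
    [NormedAddCommGroup E] [NormedSpace ℝ E] [CompleteSpace E] {l : Filter ι}
    {μ : ι → Measure α} [∀ i, IsProbabilityMeasure (μ i)] {h : ι → α → E} {c : E}
    (hint : ∀ i, Integrable (h i) (μ i)) (hh : Tendsto (fun i => range (h i)) l (𝓝 c).smallSets) :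
    Tendsto (fun i => ∫ x, h i x ∂μ i) l (𝓝 c) := by
  refine Metric.nhds_basis_closedBall.tendsto_right_iff.2 fun ε hε => ?_
  filter_upwards [tendsto_smallSets_iff.1 hh _ (Metric.closedBall_mem_nhds c hε)] with i hi
  exact (convex_closedBall c ε).integral_mem Metric.isClosed_closedBall
    (ae_of_all _ fun x => hi (mem_range_self x)) (hint i)

/-- For a weakly hyperbolic sequence `ω` (with `I_ω = {p}`), the pushforwards
`(f_{ω_0})_* ⋯ (f_{ω_n})_* μ_n` converge weakly-* to `δ_p`. -/
theorem stmt8 {M : Type*} [MetricSpace M] [CompactSpace M]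
    [MeasurableSpace M] [BorelSpace M]
    {k : ℕ} (f : Fin k → M → M) (hf : ∀ i, Continuous (f i))
    (ω : ℕ → Fin k) (p : M)
    (hω : (⋂ n, comps f ω n '' Set.univ) = {p})
    (μ : ℕ → Measure M) (hμ : ∀ n, IsProbabilityMeasure (μ n)) :
    ∀ g : M → ℝ, Continuous g →
      Tendsto (fun n => ∫ x, g x ∂((μ n).map (comps f ω n))) atTop (𝓝 (g p)) := by
  intro g hg
  have hφ := continuous_comps hf ω
  have hK : Tendsto (fun n => range (comps f ω n)) atTop (𝓝 p).smallSets :=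
    tendsto_smallSets_nhds_of_antitone_isCompact (antitone_range_comps f ω)
      (fun n => isCompact_range (hφ n)) (by simpa only [image_univ] using hω)
  have hgK : Tendsto (fun n => range (g ∘ comps f ω n)) atTop (𝓝 (g p)).smallSets := by
    simp only [range_comp]
    exact (hg.tendsto p).image_smallSets.comp hK
  simp_rw [fun n => integral_map (hφ n).aemeasurable hg.aestronglyMeasurable (μ := μ n)]
  exact tendsto_integral_of_tendsto_range_smallSets
    (fun n => (hg.comp (hφ n)).integrable_of_hasCompactSupport (.of_compactSpace _)) hgK
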